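/- For every ρ ≥ 0 and m > 0, the inequalities j_m(ρ) ≤ ρ √(η² + m²) ≤ (4/3) j_m(ρ) hold, where η = (6π²ρ/q)^{1/3}. -/

import Mathlib

/-
In polar coordinates `j_m(ρ) = q/(2π²) ∫₀^η y² √(y² + m²) dy`, while `ρ = q η³/(6π²)`, so both
inequalities compare `∫₀^η y² √(y² + m²) dy` with `η³ √(η² + m²)`. On `[0, η]` the integrand is
at most `y² √(η² + m²)`, and at least `(y³/η) √(η² + m²)` because `y ↦ √(y² + m²)/y` is
decreasing; integrating gives the factors `1/3` and `1/4`.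
-/

open MeasureTheory Real

noncomputable def jm (q m ρ : ℝ) : ℝ :=
  (q / (2 * π) ^ 3) *
    ∫ p in Metric.ball (0 : EuclideanSpace ℝ (Fin 3)) ((6 * π ^ 2 * ρ / q) ^ ((1:ℝ)/3)),
      Real.sqrt (‖p‖ ^ 2 + m ^ 2)

noncomputable def jmTilde (q m ρ : ℝ) : ℝ :=
  (q / (2 * π) ^ 3) *
    ∫ p in Metric.ball (0 : EuclideanSpace ℝ (Fin 3)) ((6 * π ^ 2 * ρ / q) ^ ((1:ℝ)/3)),
      (Real.sqrt (‖p‖ ^ 2 + m ^ 2))⁻¹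

noncomputable def Kcl (q : ℝ) : ℝ := (3/4) * (6 * π ^ 2 / q) ^ ((1:ℝ)/3)

open Set Metric

theorem setIntegral_ball_fun_norm {E : Type*} [NormedAddCommGroup E] [NormedSpace ℝ E]
    [Nontrivial E] [FiniteDimensional ℝ E] [MeasurableSpace E] [BorelSpace E] (μ : Measure E)
    [μ.IsAddHaarMeasure] {r : ℝ} (hr : 0 ≤ r) (f : ℝ → ℝ) :
    ∫ x in ball (0 : E) r, f ‖x‖ ∂μ = Module.finrank ℝ E * μ.real (ball 0 1) *
      ∫ y in (0 : ℝ)..r, y ^ (Module.finrank ℝ E - 1) * f y := by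
  have h_indicator : ∫ x in ball (0 : E) r, f ‖x‖ ∂μ = ∫ x, (Iio r).indicator f ‖x‖ ∂μ := by
    rw [← integral_indicator measurableSet_ball]
    congr 1 with x
    by_cases h : ‖x‖ < r <;> simp [h]
  have h_radial : ∫ y in Ioi (0 : ℝ), y ^ (Module.finrank ℝ E - 1) • (Iio r).indicator f y =
      ∫ y in (0 : ℝ)..r, y ^ (Module.finrank ℝ E - 1) * f y := by
    rw [setIntegral_congr_fun measurableSet_Ioi (g := (Iio r).indicator
        fun y ↦ y ^ (Module.finrank ℝ E - 1) * f y) fun y _ ↦ by by_cases h : y < r <;> simp [h],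
      setIntegral_indicator measurableSet_Iio, Ioi_inter_Iio, intervalIntegral.integral_of_le hr,
      integral_Ioc_eq_integral_Ioo]
  rw [h_indicator, integral_fun_norm_addHaar, h_radial, nsmul_eq_mul, smul_eq_mul, mul_assoc]

theorem setIntegral_ball_fun_norm_fin_three {r : ℝ} (hr : 0 ≤ r) (f : ℝ → ℝ) :
    ∫ x in ball (0 : EuclideanSpace ℝ (Fin 3)) r, f ‖x‖ =
      4 * π * ∫ y in (0 : ℝ)..r, y ^ 2 * f y := by
  rw [setIntegral_ball_fun_norm volume hr, finrank_euclideanSpace_fin, measureReal_def,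
    EuclideanSpace.volume_ball_fin_three, ENNReal.ofReal_one, one_pow, one_mul,
    ENNReal.toReal_ofReal (by positivity)]
  ring

theorem mul_sqrt_sq_add_sq_le {y η : ℝ} (m : ℝ) (hy : 0 ≤ y) (hyη : y ≤ η) :
    y * √(η ^ 2 + m ^ 2) ≤ η * √(y ^ 2 + m ^ 2) := by
  have h : √(y ^ 2 * (η ^ 2 + m ^ 2)) ≤ √(η ^ 2 * (y ^ 2 + m ^ 2)) := sqrt_le_sqrt <| by
    nlinarith [mul_le_mul_of_nonneg_right (pow_le_pow_left₀ hy hyη 2) (sq_nonneg m)]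
  rwa [sqrt_mul (sq_nonneg _), sqrt_mul (sq_nonneg _), sqrt_sq hy, sqrt_sq (hy.trans hyη)] at h

theorem integral_sq_mul_sqrt_le (m : ℝ) {η : ℝ} (hη : 0 ≤ η) :
    ∫ y in (0 : ℝ)..η, y ^ 2 * √(y ^ 2 + m ^ 2) ≤ η ^ 3 / 3 * √(η ^ 2 + m ^ 2) := by
  calc ∫ y in (0 : ℝ)..η, y ^ 2 * √(y ^ 2 + m ^ 2)
      ≤ ∫ y in (0 : ℝ)..η, y ^ 2 * √(η ^ 2 + m ^ 2) := by
        refine intervalIntegral.integral_mono_on hη (Continuous.intervalIntegrable (by fun_prop) _ _)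
          (Continuous.intervalIntegrable (by fun_prop) _ _) fun y ⟨hy, hyη⟩ ↦ ?_
        gcongr
    _ = η ^ 3 / 3 * √(η ^ 2 + m ^ 2) := by
        rw [intervalIntegral.integral_mul_const, integral_pow]
        ring

theorem le_integral_sq_mul_sqrt (m : ℝ) {η : ℝ} (hη : 0 ≤ η) :
    η ^ 3 / 4 * √(η ^ 2 + m ^ 2) ≤ ∫ y in (0 : ℝ)..η, y ^ 2 * √(y ^ 2 + m ^ 2) := by
  rcases hη.eq_or_lt with rfl | hη
  · simp
  have h_mul : η * (η ^ 3 / 4 * √(η ^ 2 + m ^ 2)) ≤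
      η * ∫ y in (0 : ℝ)..η, y ^ 2 * √(y ^ 2 + m ^ 2) :=
    calc η * (η ^ 3 / 4 * √(η ^ 2 + m ^ 2))
        = ∫ y in (0 : ℝ)..η, y ^ 2 * (y * √(η ^ 2 + m ^ 2)) := by
          simp_rw [← mul_assoc, ← pow_succ, intervalIntegral.integral_mul_const, integral_pow]
          ring
      _ ≤ ∫ y in (0 : ℝ)..η, y ^ 2 * (η * √(y ^ 2 + m ^ 2)) :=
          intervalIntegral.integral_mono_on hη.le (Continuous.intervalIntegrable (by fun_prop) _ _)
            (Continuous.intervalIntegrable (by fun_prop) _ _) fun y hy ↦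
            mul_le_mul_of_nonneg_left (mul_sqrt_sq_add_sq_le m hy.1 hy.2) (sq_nonneg y)
      _ = η * ∫ y in (0 : ℝ)..η, y ^ 2 * √(y ^ 2 + m ^ 2) := by
          rw [← intervalIntegral.integral_const_mul]
          congr 1 with y
          ring
  exact le_of_mul_le_mul_left h_mul hη

theorem jm_eq_integral (q m ρ : ℝ) (h : 0 ≤ 6 * π ^ 2 * ρ / q) :
    jm q m ρ = q / (2 * π ^ 2) * ∫ y in (0 : ℝ)..(6 * π ^ 2 * ρ / q) ^ ((1 : ℝ) / 3),
      y ^ 2 * √(y ^ 2 + m ^ 2) := by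
  rw [jm, setIntegral_ball_fun_norm_fin_three (rpow_nonneg h _) fun y ↦ √(y ^ 2 + m ^ 2)]
  field_simp
  ring

theorem jm_le_rho_sqrt_le_general (q : ℕ) (hq : 1 ≤ q) (m ρ : ℝ) (hρ : 0 ≤ ρ) :
    jm q m ρ ≤ ρ * Real.sqrt (((6 * π ^ 2 * ρ / q) ^ ((1:ℝ)/3)) ^ 2 + m ^ 2) ∧
      ρ * Real.sqrt (((6 * π ^ 2 * ρ / q) ^ ((1:ℝ)/3)) ^ 2 + m ^ 2) ≤ (4/3) * jm q m ρ := by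
  have hq_pos : (0 : ℝ) < q := by exact_mod_cast hq
  have h_base : 0 ≤ 6 * π ^ 2 * ρ / q := by positivity
  have hη3 : ((6 * π ^ 2 * ρ / q) ^ ((1 : ℝ) / 3)) ^ 3 = 6 * π ^ 2 * ρ / q := by
    rw [← rpow_natCast, ← rpow_mul h_base]
    norm_num
  rw [jm_eq_integral q m ρ h_base]
  set η := (6 * π ^ 2 * ρ / q) ^ ((1 : ℝ) / 3)
  have hη : 0 ≤ η := rpow_nonneg h_base _
  have hρ_eq : ρ = q / (2 * π ^ 2) * (η ^ 3 / 3) := by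
    rw [hη3]
    field_simp
    ring
  have hc : 0 ≤ q / (2 * π ^ 2) := by positivity
  have h_upper := mul_le_mul_of_nonneg_left (integral_sq_mul_sqrt_le m hη) hc
  have h_lower := mul_le_mul_of_nonneg_left (le_integral_sq_mul_sqrt m hη) hc
  constructor <;> rw [hρ_eq] <;> linarith

theorem jm_le_rho_sqrt_le (q : ℕ) (hq : 1 ≤ q) (m ρ : ℝ) (hm : 0 < m) (hρ : 0 ≤ ρ) :
    jm q m ρ ≤ ρ * Real.sqrt (((6 * π ^ 2 * ρ / q) ^ ((1:ℝ)/3)) ^ 2 + m ^ 2) ∧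
      ρ * Real.sqrt (((6 * π ^ 2 * ρ / q) ^ ((1:ℝ)/3)) ^ 2 + m ^ 2) ≤ (4/3) * jm q m ρ :=
  jm_le_rho_sqrt_le_general q hq m ρ hρ
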